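/- Let H be a finite-dimensional real Hilbert space and let f, g : H → ℝ ∪ {+∞} satisfy Assumptions A1–A2 (f, g proper, lower semicontinuous, convex, dom g ⊆ dom f, f Fréchet differentiable on an open set containing dom g, ∇f uniformly continuous on bounded subsets of dom g and mapping bounded subsets of dom g to bounded sets). Suppose the set S* of minimizers of f+g is nonempty and ∇f is locally Lipschitz continuous at every point of S*. Let (x^k) and (α_k) be generated by the forward-backward method with Linesearch 1 (x⁰ ∈ dom g, σ > 0, θ ∈ (0,1), δ ∈ (0,1/2), α_k the largest α ∈ {σθⁿ : n ≥ 0} with α‖∇f(J(x^k,α)) − ∇f(x^k)‖ ≤ δ‖J(x^k,α) − x^k‖, x^{k+1} = J(x^k, α_k)). Then there exist x_* ∈ S* and a Lipschitz constant 𝓛 > 0 of ∇f on a neighborhood of x_* such that liminf_{k→∞} α_k ≥ min{σ, δθ/𝓛}; consequently there exists α > 0 with α_k ≥ α for all k. -/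

import Mathlib

open Set Filter Topology Bornology RealInnerProductSpace

noncomputable section

variable {H : Type*} [NormedAddCommGroup H] [InnerProductSpace ℝ H] [CompleteSpace H]

/-- The effective domain of an extended-real-valued function. -/
def edom (h : H → EReal) : Set H := {x | h x < ⊤}

/-- `h` is a proper, lower semicontinuous, convex extended-real-valued function. -/
def ProperLscConvex (h : H → EReal) : Prop :=
  (∃ x, h x < ⊤) ∧ (∀ x, ⊥ < h x) ∧ LowerSemicontinuous h ∧
    ∀ x y : H, ∀ a b : ℝ, 0 ≤ a → 0 ≤ b → a + b = 1 →
      h (a • x + b • y) ≤ (a : EReal) * h x + (b : EReal) * h y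

/-- `p` is the proximal point `prox_{αg}(z)`, i.e. a minimizer of
`y ↦ g(y) + (1/(2α))‖y - z‖²` (such a minimizer is automatically unique). -/
def IsProxPt (g : H → EReal) (α : ℝ) (z p : H) : Prop :=
  ∀ y : H, g p + (((1 / (2 * α)) * ‖p - z‖ ^ 2 : ℝ) : EReal)
    ≤ g y + (((1 / (2 * α)) * ‖y - z‖ ^ 2 : ℝ) : EReal)

/-- `f` is Fréchet differentiable, with gradient `f'`, on an open set containing `s`
(in particular `f` is finite there). -/
def GradOnOpenSupset (f : H → EReal) (f' : H → H) (s : Set H) : Prop :=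
  ∃ U : Set H, IsOpen U ∧ s ⊆ U ∧
    ∀ x ∈ U, f x ≠ ⊤ ∧ HasGradientAt (fun y => (f y).toReal) (f' x) x

/-- Second half of Assumption A2: `f'` is uniformly continuous on bounded subsets of
`dom g` and maps bounded subsets of `dom g` to bounded sets. -/
def UCBddOnBounded (g : H → EReal) (f' : H → H) : Prop :=
  ∀ A : Set H, A ⊆ edom g → IsBounded A →
    UniformContinuousOn f' A ∧ IsBounded (f' '' A)

/-- The Linesearch-1 acceptance inequality at the point `x` with stepsize `α`. -/
def LS1 (f' : H → H) (J : H → ℝ → H) (δ : ℝ) (x : H) (α : ℝ) : Prop :=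
  α * ‖f' (J x α) - f' x‖ ≤ δ * ‖J x α - x‖

/-- `α` is the output of Linesearch 1 at `x`: the largest element of
`{σ, σθ, σθ², …}` satisfying the acceptance inequality. -/
def LS1Step (f' : H → H) (J : H → ℝ → H) (δ σ θ : ℝ) (x : H) (α : ℝ) : Prop :=
  ∃ n : ℕ, α = σ * θ ^ n ∧ LS1 f' J δ x α ∧
    ∀ m : ℕ, m < n → ¬ LS1 f' J δ x (σ * θ ^ m)

/-- The set of minimizers `S⁎` of `f + g` over `H`. -/
def argminSet (f g : H → EReal) : Set H := {x | ∀ y, f x + g x ≤ f y + g y}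

/-- The Linesearch-2 acceptance inequality at `x` (with `Jx = prox_g(x - ∇f(x))`)
with stepsize `β`. -/
def LS2Ineq (f g : H → EReal) (f' : H → H) (x Jx : H) (β : ℝ) : Prop :=
  f (x - β • (x - Jx)) + g (x - β • (x - Jx)) ≤
    f x + g x - (β : EReal) * (g x - g Jx)
      - ((β * ⟪f' x, x - Jx⟫ : ℝ) : EReal) + (((β / 2) * ‖x - Jx‖ ^ 2 : ℝ) : EReal)

/-- `v` belongs to the convex subdifferential `∂h(y)`. -/
def InSubdiff (h : H → EReal) (y v : H) : Prop :=
  ∀ z : H, ((⟪v, z - y⟫ : ℝ) : EReal) ≤ h z - h y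

/-- `h` is strongly convex with modulus `μ`. -/
def StrongConvexWith (h : H → EReal) (μ : ℝ) : Prop :=
  ∀ x y v : H, InSubdiff h y v →
    h y + ((⟪v, x - y⟫ : ℝ) : EReal) + (((μ / 2) * ‖x - y‖ ^ 2 : ℝ) : EReal) ≤ h x


section Aux
set_option linter.unusedSectionVars false

lemma slope_limit_aux {ψ : ℝ → ℝ} {c d : ℝ}
    (hder : HasDerivAt ψ d 0)
    (hub : ∀ t ∈ Set.Ioc (0:ℝ) 1, ψ t ≤ ψ 0 + t * c) : d ≤ c := by
  rw [hasDerivAt_iff_tendsto_slope] at hder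
  have hmono : 𝓝[>] (0:ℝ) ≤ 𝓝[≠] (0:ℝ) :=
    nhdsWithin_mono 0 (fun t ht => ne_of_gt ht)
  refine le_of_tendsto (hder.mono_left hmono) ?_
  filter_upwards [Ioc_mem_nhdsGT_of_mem (by norm_num : (0:ℝ) ∈ Set.Ico (0:ℝ) 1)] with t ht
  have ht0 : 0 < t := ht.1
  have h2 := hub t ht
  rw [slope_def_field, sub_zero, div_le_iff₀ ht0]
  nlinarith

lemma line_hasDerivAt (x v : H) (φ : H → ℝ) {G : H} (hd : HasGradientAt φ G x) :
    HasDerivAt (fun t : ℝ => φ (x + t • v)) ⟪G, v⟫ 0 := by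
  have h1 : HasDerivAt (fun t : ℝ => x + t • v) v 0 := by
    simpa using ((hasDerivAt_id (0:ℝ)).smul_const v).const_add x
  have hd' : HasFDerivAt φ ((InnerProductSpace.toDual ℝ H) G) (x + (0:ℝ) • v) := by
    simpa using hd.hasFDerivAt
  have h2 := hd'.comp_hasDerivAt (0:ℝ) h1
  simpa [InnerProductSpace.toDual_apply_apply, Function.comp_def] using h2

lemma pos_lin_nonneg {C D : ℝ} (h : ∀ t ∈ Set.Ioc (0:ℝ) 1, 0 ≤ C + t * D) : 0 ≤ C := by
  by_contra hC
  push_neg at hC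
  rcases le_or_gt D 0 with hD | hD
  · have := h 1 (by norm_num); nlinarith
  · have hCp : 0 < -C := by linarith
    set t := min 1 (-C / (2 * D)) with ht
    have ht0 : 0 < t := lt_min (by norm_num) (by positivity)
    have ht1 : t ≤ 1 := min_le_left _ _
    have h2 := h t ⟨ht0, ht1⟩
    have h3 : t ≤ -C / (2 * D) := min_le_right _ _
    have h4 : t * D ≤ (-C / (2 * D)) * D := by nlinarith
    have h5 : (-C / (2 * D)) * D = -C / 2 := by field_simp
    nlinarith

lemma prox_finite {g : H → EReal} (hg : ProperLscConvex g) {α : ℝ} {z p : H}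
    (hp : IsProxPt g α z p) : g p ≠ ⊤ := by
  obtain ⟨y0, hy0⟩ := hg.1
  have h := hp y0
  intro htop
  rw [htop, EReal.top_add_coe] at h
  have h2 : g y0 + (((1 / (2 * α)) * ‖y0 - z‖ ^ 2 : ℝ) : EReal) < ⊤ :=
    EReal.add_lt_top hy0.ne (EReal.coe_ne_top _)
  exact absurd (top_le_iff.mp h) h2.ne

lemma prox_subgrad {g : H → EReal} (hg : ProperLscConvex g) {α : ℝ} {z p : H}
    (hα : 0 < α) (hp : IsProxPt g α z p) {y : H} (hy : g y ≠ ⊤) :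
    (g p).toReal + (1/α) * ⟪z - p, y - p⟫ ≤ (g y).toReal := by
  have hptop := prox_finite hg hp
  have hbot := hg.2.1
  set γp := (g p).toReal
  set γy := (g y).toReal
  have hgp : g p = (γp : EReal) := (EReal.coe_toReal hptop (hbot p).ne').symm
  have hgy : g y = (γy : EReal) := (EReal.coe_toReal hy (hbot y).ne').symm
  have key : 0 ≤ (γy - γp - (1/α) * ⟪z - p, y - p⟫) := by
    apply pos_lin_nonneg (D := (1/(2*α)) * ‖y - p‖^2)
    intro t htIoc
    have ht0 := htIoc.1
    have hconv := hg.2.2.2 p y (1 - t) t (by linarith [htIoc.2]) ht0.le (by ring)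
    have hpt : (1 - t) • p + t • y = p + t • (y - p) := by rw [smul_sub]; module
    rw [hpt, hgp, hgy, ← EReal.coe_mul, ← EReal.coe_mul, ← EReal.coe_add] at hconv
    have h1 := hp (p + t • (y - p))
    rw [hgp, ← EReal.coe_add] at h1
    have h2 := le_trans h1 (add_le_add_left hconv _)
    rw [← EReal.coe_add, EReal.coe_le_coe_iff] at h2
    have hexp : ‖p + t • (y - p) - z‖^2
        = ‖p - z‖^2 + 2*(t*⟪p - z, y - p⟫) + t^2*‖y - p‖^2 := by
      have : p + t • (y - p) - z = (p - z) + t • (y - p) := by abel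
      rw [this, norm_add_sq_real, real_inner_smul_right, norm_smul, Real.norm_eq_abs,
        mul_pow, sq_abs]
    rw [hexp] at h2
    have hinner : ⟪z - p, y - p⟫ = -⟪p - z, y - p⟫ := by
      rw [show z - p = -(p - z) by abel, inner_neg_left]
    rw [hinner]
    have hα' : (1:ℝ)/α = 2 * (1/(2*α)) := by field_simp
    rw [hα']
    have hc : 0 < 1/(2*α) := by positivity
    nlinarith [h2]
  linarith

lemma prox_nonexpansive {g : H → EReal} (hg : ProperLscConvex g) {α : ℝ} {z w p q : H}
    (hα : 0 < α) (hp : IsProxPt g α z p) (hq : IsProxPt g α w q) :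
    ‖p - q‖ ≤ ‖z - w‖ := by
  have h1 := prox_subgrad hg hα hp (y := q) (prox_finite hg hq)
  have h2 := prox_subgrad hg hα hq (y := p) (prox_finite hg hp)
  have hsum : ⟪z - p, q - p⟫ + ⟪w - q, p - q⟫ ≤ 0 := by
    have hα' : 0 < 1/α := by positivity
    have h3 : (1/α) * (⟪z - p, q - p⟫ + ⟪w - q, p - q⟫) ≤ 0 := by
      have hexp : (1/α) * (⟪z - p, q - p⟫ + ⟪w - q, p - q⟫)
          = (1/α) * ⟪z - p, q - p⟫ + (1/α) * ⟪w - q, p - q⟫ := by ring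
      linarith [h1, h2, hexp.le, hexp.ge]
    by_contra hpos
    push_neg at hpos
    have := mul_pos hα' hpos
    linarith
  have e1 : ⟪z - p, q - p⟫ = -⟪z - p, p - q⟫ := by
    rw [show q - p = -(p - q) by abel, inner_neg_right]
  have e2 : ⟪w - q, p - q⟫ - ⟪z - p, p - q⟫
      = ⟪w - z, p - q⟫ + ⟪p - q, p - q⟫ := by
    rw [← inner_sub_left, ← inner_add_left]
    congr 1
    abel
  have e3 : ⟪p - q, p - q⟫ = ‖p - q‖^2 := real_inner_self_eq_norm_sq _
  have e4 : -(‖w - z‖ * ‖p - q‖) ≤ ⟪w - z, p - q⟫ :=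
    (abs_le.mp (abs_real_inner_le_norm _ _)).1
  have h5 : ‖p - q‖^2 ≤ ‖w - z‖ * ‖p - q‖ := by
    rw [e1] at hsum
    nlinarith [hsum, e2, e3, e4]
  rcases eq_or_lt_of_le (norm_nonneg (p - q)) with h0 | h0
  · rw [← h0]; exact norm_nonneg _
  · rw [norm_sub_rev w z] at h5
    nlinarith [h5]

lemma grad_ineq {f : H → EReal}
    (hconv : ∀ x y : H, ∀ a b : ℝ, 0 ≤ a → 0 ≤ b → a + b = 1 →
      f (a • x + b • y) ≤ (a : EReal) * f x + (b : EReal) * f y)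
    (hbot : ∀ x, ⊥ < f x)
    {x y G : H} (hd : HasGradientAt (fun z => (f z).toReal) G x)
    (hx : f x ≠ ⊤) (hy : f y ≠ ⊤) :
    (f x).toReal + ⟪G, y - x⟫ ≤ (f y).toReal := by
  have key : ∀ t ∈ Set.Ioc (0:ℝ) 1,
      (f (x + t • (y - x))).toReal ≤ (f x).toReal + t * ((f y).toReal - (f x).toReal) := by
    intro t ht
    have h1 := hconv x y (1 - t) t (by linarith [ht.2]) ht.1.le (by ring)
    have hxy : (1 - t) • x + t • y = x + t • (y - x) := by
      rw [smul_sub]; module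
    rw [hxy] at h1
    have hfx : f x = ((f x).toReal : EReal) := (EReal.coe_toReal hx (hbot x).ne').symm
    have hfy : f y = ((f y).toReal : EReal) := (EReal.coe_toReal hy (hbot y).ne').symm
    rw [hfx, hfy, ← EReal.coe_mul, ← EReal.coe_mul, ← EReal.coe_add] at h1
    have h2 := EReal.toReal_le_toReal h1 (hbot _).ne' (EReal.coe_ne_top _)
    rw [EReal.toReal_coe] at h2
    linarith
  have hder := line_hasDerivAt x (y - x) _ hd
  have hle : ⟪G, y - x⟫ ≤ (f y).toReal - (f x).toReal := by
    refine slope_limit_aux hder ?_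
    intro t ht
    have h3 := key t ht
    simpa using h3
  linarith

end Aux


section Aux2
set_option linter.unusedSectionVars false

lemma argmin_subgrad {f g : H → EReal} (hf : ProperLscConvex f) (hg : ProperLscConvex g)
    (hdom : edom g ⊆ edom f) {G : H} {xs : H}
    (hxs : ∀ y, f xs + g xs ≤ f y + g y)
    (hd : HasGradientAt (fun z => (f z).toReal) G xs)
    (hgxs : g xs ≠ ⊤)
    {y : H} (hy : g y ≠ ⊤) :
    (g xs).toReal - ⟪G, y - xs⟫ ≤ (g y).toReal := by
  have hfbot := hf.2.1
  have hgbot := hg.2.1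
  have hfxs : f xs ≠ ⊤ := (hdom (show xs ∈ edom g from lt_top_iff_ne_top.2 hgxs)).ne
  have hfy : f y ≠ ⊤ := (hdom (show y ∈ edom g from lt_top_iff_ne_top.2 hy)).ne
  set φ := fun z : H => (f z).toReal with hφ
  set γxs := (g xs).toReal
  set γy := (g y).toReal
  have key : ∀ t ∈ Set.Ioc (0:ℝ) 1,
      -(φ (xs + t • (y - xs))) ≤ -(φ xs) + t * (γy - γxs) := by
    intro t ht
    have hconvg := hg.2.2.2 xs y (1 - t) t (by linarith [ht.2]) ht.1.le (by ring)
    have hxy : (1 - t) • xs + t • y = xs + t • (y - xs) := by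
      rw [smul_sub]; module
    rw [hxy] at hconvg
    have hggxs : g xs = (γxs : EReal) := (EReal.coe_toReal hgxs (hgbot xs).ne').symm
    have hggy : g y = (γy : EReal) := (EReal.coe_toReal hy (hgbot y).ne').symm
    rw [hggxs, hggy, ← EReal.coe_mul, ← EReal.coe_mul, ← EReal.coe_add] at hconvg
    have hgpt : g (xs + t • (y - xs)) ≠ ⊤ := by
      intro h
      rw [h] at hconvg
      exact (EReal.coe_lt_top _).not_ge hconvg
    have hfpt : f (xs + t • (y - xs)) ≠ ⊤ :=
      (hdom (show xs + t • (y - xs) ∈ edom g from lt_top_iff_ne_top.2 hgpt)).ne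
    have hmin := hxs (xs + t • (y - xs))
    have h2 : f xs + g xs ≤ ((φ (xs + t • (y - xs)) + ((1-t) * γxs + t * γy) : ℝ) : EReal) := by
      refine le_trans hmin ?_
      rw [EReal.coe_add]
      refine add_le_add ?_ hconvg
      rw [EReal.coe_toReal hfpt (hfbot _).ne']
    have hfgxs : f xs + g xs = ((φ xs + γxs : ℝ) : EReal) := by
      rw [EReal.coe_add, EReal.coe_toReal hfxs (hfbot xs).ne',
        EReal.coe_toReal hgxs (hgbot xs).ne']
    rw [hfgxs, EReal.coe_le_coe_iff] at h2
    have h3 : φ xs + t * (γxs - γy) ≤ φ (xs + t • (y - xs)) := by nlinarith [h2]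
    linarith
  have hder := (line_hasDerivAt xs (y - xs) φ hd).neg
  have hle := slope_limit_aux hder (by intro t ht; have := key t ht; simpa using this)
  linarith

lemma argmin_fixed {f g : H → EReal} (hf : ProperLscConvex f) (hg : ProperLscConvex g)
    (hdom : edom g ⊆ edom f) {G : H} {xs : H}
    (hxs : ∀ y, f xs + g xs ≤ f y + g y)
    (hd : HasGradientAt (fun z => (f z).toReal) G xs)
    (hgxs : g xs ≠ ⊤)
    {β : ℝ} {p : H} (hβ : 0 < β)
    (hp : IsProxPt g β (xs - β • G) p) : p = xs := by
  have h1 := prox_subgrad hg hβ hp (y := xs) hgxs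
  have h2 := argmin_subgrad hf hg hdom hxs hd hgxs (y := p) (prox_finite hg hp)
  have e1 : ⟪xs - β • G - p, xs - p⟫ = ‖xs - p‖^2 - β * ⟪G, xs - p⟫ := by
    rw [show xs - β • G - p = (xs - p) - β • G by abel, inner_sub_left,
      real_inner_smul_left, real_inner_self_eq_norm_sq]
  have e2 : ⟪G, p - xs⟫ = -⟪G, xs - p⟫ := by
    rw [show p - xs = -(xs - p) by abel, inner_neg_right]
  rw [e1] at h1
  rw [e2] at h2
  have h3 : (1/β) * ‖xs - p‖^2 ≤ 0 := by
    have hexp : (1/β) * (‖xs - p‖^2 - β * ⟪G, xs - p⟫)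
        = (1/β) * ‖xs - p‖^2 - ⟪G, xs - p⟫ := by field_simp
    linarith [h1, h2, hexp.le, hexp.ge]
  have hβ' : 0 < 1/β := by positivity
  have h4 : ‖xs - p‖^2 ≤ 0 := by nlinarith [h3]
  have h5 : ‖xs - p‖ = 0 := by nlinarith [norm_nonneg (xs - p), sq_nonneg ‖xs - p‖]
  have := norm_eq_zero.mp h5
  have : xs = p := by
    have h6 := sub_eq_zero.mp this
    exact h6
  exact this.symm

end Aux2


section Aux3
set_option linter.unusedSectionVars false

lemma key_ineq {f g : H → EReal} (hf : ProperLscConvex f) (hg : ProperLscConvex g)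
    (hdom : edom g ⊆ edom f) {f' : H → H} {α δ : ℝ} (hα : 0 < α)
    {xx p z : H} (hgx : g xx ≠ ⊤) (hgz : g z ≠ ⊤)
    (hdx : HasGradientAt (fun w => (f w).toReal) (f' xx) xx)
    (hdp : HasGradientAt (fun w => (f w).toReal) (f' p) p)
    (hp : IsProxPt g α (xx - α • f' xx) p)
    (hls : α * ‖f' p - f' xx‖ ≤ δ * ‖p - xx‖) :
    2*α*((((f p).toReal + (g p).toReal) - ((f z).toReal + (g z).toReal))) ≤
      ‖xx - z‖^2 - ‖p - z‖^2 - (1-2*δ)*‖p - xx‖^2 := by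
  have hfbot := hf.2.1
  have hgbot := hg.2.1
  have hgp : g p ≠ ⊤ := prox_finite hg hp
  have hfx : f xx ≠ ⊤ := (hdom (show xx ∈ edom g from lt_top_iff_ne_top.2 hgx)).ne
  have hfp : f p ≠ ⊤ := (hdom (show p ∈ edom g from lt_top_iff_ne_top.2 hgp)).ne
  have hfz : f z ≠ ⊤ := (hdom (show z ∈ edom g from lt_top_iff_ne_top.2 hgz)).ne
  set φp := (f p).toReal
  set φx := (f xx).toReal
  set φz := (f z).toReal
  set γp := (g p).toReal
  set γz := (g z).toReal
  -- prox subgradient inequality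
  have h1 := prox_subgrad hg hα hp (y := z) hgz
  have e1 : ⟪xx - α • f' xx - p, z - p⟫ = ⟪xx - p, z - p⟫ - α * ⟪f' xx, z - p⟫ := by
    rw [show xx - α • f' xx - p = (xx - p) - α • f' xx by abel, inner_sub_left,
      real_inner_smul_left]
  rw [e1] at h1
  have h1' : α * γp + (⟪xx - p, z - p⟫ - α * ⟪f' xx, z - p⟫) ≤ α * γz := by
    have hm := mul_le_mul_of_nonneg_left h1 hα.le
    have hexp : α * (γp + (1/α) * (⟪xx - p, z - p⟫ - α * ⟪f' xx, z - p⟫))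
        = α * γp + (⟪xx - p, z - p⟫ - α * ⟪f' xx, z - p⟫) := by
      field_simp
    linarith [hexp.le, hexp.ge, hm]
  -- gradient inequality at p towards xx
  have h2 : φp + ⟪f' p, xx - p⟫ ≤ φx := grad_ineq hf.2.2.2 hfbot hdp hfp hfx
  -- gradient inequality at xx towards z
  have h3 : φx + ⟪f' xx, z - xx⟫ ≤ φz := grad_ineq hf.2.2.2 hfbot hdx hfx hfz
  -- estimates
  have e3 : ⟪f' p, xx - p⟫ = ⟪f' xx, xx - p⟫ + ⟪f' p - f' xx, xx - p⟫ := by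
    rw [inner_sub_left]; ring
  have e4 : -(‖f' p - f' xx‖ * ‖xx - p‖) ≤ ⟪f' p - f' xx, xx - p⟫ :=
    (abs_le.mp (abs_real_inner_le_norm _ _)).1
  have enrm : ‖p - xx‖ = ‖xx - p‖ := norm_sub_rev _ _
  have e6 : α * (‖f' p - f' xx‖ * ‖xx - p‖) ≤ δ * ‖xx - p‖^2 := by
    rw [enrm] at hls
    nlinarith [hls, norm_nonneg (xx - p)]
  have h2b : φp ≤ φx - ⟪f' xx, xx - p⟫ + ‖f' p - f' xx‖ * ‖xx - p‖ := by
    rw [e3] at h2; linarith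
  have e5 : ⟪f' xx, z - xx⟫ = ⟪f' xx, z - p⟫ - ⟪f' xx, xx - p⟫ := by
    rw [show z - xx = (z - p) - (xx - p) by abel, inner_sub_right]
  rw [e5] at h3
  have e2 : ‖xx - z‖^2 = ‖xx - p‖^2 - 2*⟪xx - p, z - p⟫ + ‖z - p‖^2 := by
    rw [show xx - z = (xx - p) - (z - p) by abel, norm_sub_sq_real]
  have enrm2 : ‖p - z‖ = ‖z - p‖ := norm_sub_rev _ _
  rw [enrm, enrm2, e2]
  have m2 := mul_le_mul_of_nonneg_left h2b hα.le
  have m3 := mul_le_mul_of_nonneg_left h3 hα.le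
  nlinarith [h1', m2, m3, e6]

end Aux3

set_option maxHeartbeats 1000000 in
/-- Proposition 4.2(ii): in finite dimensions, if `S⁎ ≠ ∅` and `∇f` is
locally Lipschitz at each point of `S⁎`, then there are `x⁎ ∈ S⁎` and a Lipschitz
constant `𝓛 > 0` of `∇f` around `x⁎` with `liminf αₖ ≥ min{σ, δθ/𝓛}`; consequently the
stepsizes are bounded below by some `α > 0`. -/
theorem stmt11 [FiniteDimensional ℝ H]
    (f g : H → EReal) (f' : H → H) (prox : ℝ → H → H)
    (hf : ProperLscConvex f) (hg : ProperLscConvex g)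
    (hdom : edom g ⊆ edom f)
    (hdiff : GradOnOpenSupset f f' (edom g))
    (hA2 : UCBddOnBounded g f')
    (hprox : ∀ α : ℝ, 0 < α → ∀ z : H, IsProxPt g α z (prox α z))
    (J : H → ℝ → H) (hJ : ∀ (x : H) (α : ℝ), J x α = prox α (x - α • f' x))
    (hS : (argminSet f g).Nonempty)
    (hloc : ∀ z ∈ argminSet f g, ∃ ε > (0 : ℝ), ∃ L > (0 : ℝ),
      ∀ u ∈ Metric.closedBall z ε, ∀ v ∈ Metric.closedBall z ε,
        ‖f' u - f' v‖ ≤ L * ‖u - v‖)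
    (σ θ δ : ℝ) (hσ : 0 < σ) (hθ : θ ∈ Set.Ioo (0 : ℝ) 1)
    (hδ : δ ∈ Set.Ioo (0 : ℝ) (1 / 2))
    (x : ℕ → H) (a : ℕ → ℝ)
    (hx0 : x 0 ∈ edom g)
    (hls : ∀ k : ℕ, LS1Step f' J δ σ θ (x k) (a k))
    (hiter : ∀ k : ℕ, x (k + 1) = J (x k) (a k)) :
    ∃ xs ∈ argminSet f g, ∃ ε > (0 : ℝ), ∃ 𝓛 > (0 : ℝ),
      (∀ u ∈ Metric.closedBall xs ε, ∀ v ∈ Metric.closedBall xs ε,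
          ‖f' u - f' v‖ ≤ 𝓛 * ‖u - v‖) ∧
      min σ (δ * θ / 𝓛) ≤ Filter.liminf a atTop ∧
      ∃ α > (0 : ℝ), ∀ k : ℕ, α ≤ a k := by
  classical
  set φR := fun w : H => (f w).toReal with hφR
  obtain ⟨U, hUopen, hUsub, hU⟩ := hdiff
  have hgrad : ∀ w ∈ edom g, HasGradientAt φR (f' w) w := fun w hw => (hU w (hUsub hw)).2
  have hfbot := hf.2.1
  have hgbot := hg.2.1
  obtain ⟨xs, hxsmem⟩ := hS
  have hxsmin : ∀ y, f xs + g xs ≤ f y + g y := hxsmem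
  obtain ⟨y0, hy0⟩ := hg.1
  have hfy0 : f y0 ≠ ⊤ := (hdom hy0).ne
  have hgxs : g xs ≠ ⊤ := by
    intro htop
    have h1 := hxsmin y0
    rw [htop, EReal.add_top_of_ne_bot (hfbot xs).ne'] at h1
    exact (EReal.add_lt_top hfy0 hy0.ne).ne (top_le_iff.mp h1)
  have hxsdom : xs ∈ edom g := lt_top_iff_ne_top.2 hgxs
  have hfxs : f xs ≠ ⊤ := (hdom hxsdom).ne
  have hθ0 := hθ.1
  have hθ1 := hθ.2
  have hδ0 := hδ.1
  have hδhalf : δ < 1/2 := hδ.2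
  -- basic stepsize facts
  have hapos : ∀ k, 0 < a k := by
    intro k; obtain ⟨n, hn, -, -⟩ := hls k; rw [hn]; positivity
  have haσ : ∀ k, a k ≤ σ := by
    intro k; obtain ⟨n, hn, -, -⟩ := hls k; rw [hn]
    nlinarith [pow_le_one₀ hθ0.le hθ1.le (n := n), pow_nonneg hθ0.le n]
  have hstep : ∀ k, IsProxPt g (a k) (x k - a k • f' (x k)) (x (k+1)) := by
    intro k; rw [hiter k, hJ]; exact hprox _ (hapos k) _
  have hLSk : ∀ k, a k * ‖f' (x (k+1)) - f' (x k)‖ ≤ δ * ‖x (k+1) - x k‖ := by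
    intro k
    obtain ⟨n, hn, hls1, -⟩ := hls k
    rw [hiter k]
    exact hls1
  have hdomk : ∀ k, x k ∈ edom g := by
    intro k
    induction k with
    | zero => exact hx0
    | succ k ih => exact lt_top_iff_ne_top.2 (prox_finite hg (hstep k))
  have hFmin : ∀ w, g w ≠ ⊤ → φR xs + (g xs).toReal ≤ φR w + (g w).toReal := by
    intro w hw
    have hfw : f w ≠ ⊤ := (hdom (lt_top_iff_ne_top.2 hw)).ne
    have h1 := hxsmin w
    have e1 : f xs + g xs = ((φR xs + (g xs).toReal : ℝ) : EReal) := by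
      rw [EReal.coe_add, EReal.coe_toReal hfxs (hfbot xs).ne',
        EReal.coe_toReal hgxs (hgbot xs).ne']
    have e2 : f w + g w = ((φR w + (g w).toReal : ℝ) : EReal) := by
      rw [EReal.coe_add, EReal.coe_toReal hfw (hfbot w).ne',
        EReal.coe_toReal hw (hgbot w).ne']
    rw [e1, e2, EReal.coe_le_coe_iff] at h1
    exact h1
  have hfej : ∀ k, ‖x (k+1) - xs‖ ≤ ‖x k - xs‖ := by
    intro k
    have hkey := key_ineq hf hg hdom (hapos k) (hdomk k).ne hgxs
      (hgrad (x k) (hdomk k)) (hgrad (x (k+1)) (hdomk (k+1))) (hstep k) (hLSk k)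
    have hmin := hFmin (x (k+1)) (lt_top_iff_ne_top.1 (hdomk (k+1)))
    by_contra hcon
    push_neg at hcon
    nlinarith [hkey, hmin, hapos k, norm_nonneg (x (k+1) - x k),
      norm_nonneg (x k - xs), norm_nonneg (x (k+1) - xs),
      mul_self_lt_mul_self (norm_nonneg (x k - xs)) hcon,
      mul_nonneg (mul_nonneg (by norm_num : (0:ℝ) ≤ 2) (hapos k).le)
        (sub_nonneg.mpr hmin), sq_nonneg ‖x (k+1) - x k‖]
  set R0 := ‖x 0 - xs‖ with hR0
  have hbound : ∀ k, ‖x k - xs‖ ≤ R0 := by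
    intro k
    induction k with
    | zero => exact le_refl _
    | succ k ih => exact (hfej k).trans ih
  -- Main claim: uniform positive lower bound on the stepsizes
  have hP : ∃ c > (0:ℝ), ∀ k, c ≤ a k := by
    by_contra hP
    push_neg at hP
    have hsel : ∀ j : ℕ, ∃ k, a k < min σ (1/(j+1)) :=
      fun j => hP _ (lt_min hσ (by positivity))
    choose kseq hkseq using hsel
    set β : ℕ → ℝ := fun j => a (kseq j) / θ with hβdef
    set xj : ℕ → H := fun j => x (kseq j) with hxjdef
    set yj : ℕ → H := fun j => J (xj j) (β j) with hyjdef
    have hβpos : ∀ j, 0 < β j := fun j => div_pos (hapos _) hθ0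
    have hyprox : ∀ j, IsProxPt g (β j) (xj j - β j • f' (xj j)) (yj j) := by
      intro j
      have : yj j = prox (β j) (xj j - β j • f' (xj j)) := hJ _ _
      rw [this]
      exact hprox _ (hβpos j) _
    have hydom : ∀ j, g (yj j) ≠ ⊤ := fun j => prox_finite hg (hyprox j)
    have hfail : ∀ j, β j ≤ σ ∧
        δ * ‖yj j - xj j‖ < β j * ‖f' (yj j) - f' (xj j)‖ := by
      intro j
      obtain ⟨n, hn, -, hm⟩ := hls (kseq j)
      have haj := hkseq j
      have hn0 : n ≠ 0 := by
        intro h0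
        rw [h0, pow_zero, mul_one] at hn
        have := (lt_min_iff.mp haj).1
        rw [hn] at this
        exact lt_irrefl σ this
      have hβeq : β j = σ * θ^(n-1) := by
        have hpow : θ^n = θ^(n-1) * θ := by
          conv_lhs => rw [← Nat.sub_add_cancel (Nat.one_le_iff_ne_zero.2 hn0)]
          rw [pow_succ]
        rw [hβdef]
        simp only
        rw [hn, hpow]
        field_simp
      constructor
      · rw [hβeq]
        nlinarith [pow_le_one₀ hθ0.le hθ1.le (n := n-1), pow_nonneg hθ0.le (n-1)]
      · have hnot := hm (n-1) (by omega)
        rw [← hβeq] at hnot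
        unfold LS1 at hnot
        push_neg at hnot
        exact hnot
    -- bounded set A1 and bound M1 for f' on the iterates
    set A1 : Set H := edom g ∩ Metric.closedBall xs R0 with hA1def
    have hxA1 : ∀ k, x k ∈ A1 := by
      intro k
      refine ⟨hdomk k, ?_⟩
      rw [Metric.mem_closedBall, dist_eq_norm]
      exact hbound k
    obtain ⟨hUC1, hBd1⟩ := hA2 A1 inter_subset_left
      (Metric.isBounded_closedBall.subset inter_subset_right)
    rw [isBounded_iff_forall_norm_le] at hBd1
    obtain ⟨M1, hM1⟩ := hBd1
    set M1' := max M1 0 with hM1'def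
    have hM1'f : ∀ k, ‖f' (x k)‖ ≤ M1' :=
      fun k => le_trans (hM1 _ (mem_image_of_mem f' (hxA1 k))) (le_max_left _ _)
    -- fixed point of prox at xs
    have hfix : ∀ β' : ℝ, 0 < β' → prox β' (xs - β' • f' xs) = xs := fun β' hβ' =>
      argmin_fixed hf hg hdom hxsmin (hgrad xs hxsdom) hgxs hβ' (hprox β' hβ' _)
    -- the yj are bounded
    set R := R0 + σ * (M1' + ‖f' xs‖) with hRdef
    have hM1'0 : 0 ≤ M1' := le_max_right _ _
    have hR0R : R0 ≤ R := by
      have : 0 ≤ σ * (M1' + ‖f' xs‖) := by positivity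
      linarith
    have hyB : ∀ j, ‖yj j - xs‖ ≤ R := by
      intro j
      have h1 : yj j = prox (β j) (xj j - β j • f' (xj j)) := hJ _ _
      have h2 := prox_nonexpansive hg (hβpos j) (hyprox j)
        (hprox (β j) (hβpos j) (xs - β j • f' xs))
      rw [hfix (β j) (hβpos j)] at h2
      have e1 : (xj j - β j • f' (xj j)) - (xs - β j • f' xs)
          = (xj j - xs) - β j • (f' (xj j) - f' xs) := by
        rw [smul_sub]; abel
      rw [e1] at h2
      have h3 : ‖(xj j - xs) - β j • (f' (xj j) - f' xs)‖
          ≤ ‖xj j - xs‖ + β j * ‖f' (xj j) - f' xs‖ := by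
        refine (norm_sub_le _ _).trans ?_
        rw [norm_smul, Real.norm_eq_abs, abs_of_pos (hβpos j)]
      have h4 : ‖f' (xj j) - f' xs‖ ≤ M1' + ‖f' xs‖ := by
        refine (norm_sub_le _ _).trans ?_
        have := hM1'f (kseq j)
        simp only [hxjdef]
        linarith
      have h5 : ‖xj j - xs‖ ≤ R0 := hbound (kseq j)
      have h6 : β j * ‖f' (xj j) - f' xs‖ ≤ σ * (M1' + ‖f' xs‖) := by
        have hβσ := (hfail j).1
        have hn1 : 0 ≤ ‖f' (xj j) - f' xs‖ := norm_nonneg _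
        nlinarith [hβpos j]
      calc ‖yj j - xs‖ ≤ ‖(xj j - xs) - β j • (f' (xj j) - f' xs)‖ := h2
        _ ≤ ‖xj j - xs‖ + β j * ‖f' (xj j) - f' xs‖ := h3
        _ ≤ R := by rw [hRdef]; linarith
    -- big bounded set A and bound M for f'
    set A : Set H := edom g ∩ Metric.closedBall xs R with hAdef
    obtain ⟨hUC, hBd⟩ := hA2 A inter_subset_left
      (Metric.isBounded_closedBall.subset inter_subset_right)
    rw [isBounded_iff_forall_norm_le] at hBd
    obtain ⟨M, hM⟩ := hBd
    have hxA : ∀ j, xj j ∈ A := by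
      intro j
      refine ⟨hdomk (kseq j), ?_⟩
      rw [Metric.mem_closedBall, dist_eq_norm]
      exact (hbound (kseq j)).trans hR0R
    have hyA : ∀ j, yj j ∈ A := by
      intro j
      refine ⟨lt_top_iff_ne_top.2 (hydom j), ?_⟩
      rw [Metric.mem_closedBall, dist_eq_norm]
      exact hyB j
    have hMx : ∀ j, ‖f' (xj j)‖ ≤ M := fun j => hM _ (mem_image_of_mem f' (hxA j))
    have hMy : ∀ j, ‖f' (yj j)‖ ≤ M := fun j => hM _ (mem_image_of_mem f' (hyA j))
    -- β j tends to 0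
    have hβ0 : Filter.Tendsto β atTop (𝓝 0) := by
      have hub : ∀ j : ℕ, β j ≤ (1/θ) * (1/(j+1)) := by
        intro j
        have := (min_le_right σ (1/(j+1:ℝ))).trans_lt' (hkseq j)
        rw [hβdef]
        simp only
        rw [div_le_iff₀ hθ0]
        have h2 : (0:ℝ) < 1/(j+1) := by positivity
        calc a (kseq j) ≤ 1/(j+1:ℝ) := this.le
          _ = (1/θ) * (1/(j+1:ℝ)) * θ := by field_simp
      have hlb : ∀ j : ℕ, 0 ≤ β j := fun j => (hβpos j).le
      have htend : Filter.Tendsto (fun j : ℕ => (1/θ) * (1/(j+1:ℝ))) atTop (𝓝 0) := by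
        have := tendsto_one_div_add_atTop_nhds_zero_nat.const_mul (1/θ)
        simpa using this
      exact squeeze_zero hlb hub htend
    -- distance between yj and xj tends to 0
    have hM0 : 0 ≤ M := le_trans (norm_nonneg _) (hMx 0)
    have hdist0 : Filter.Tendsto (fun j => ‖yj j - xj j‖) atTop (𝓝 0) := by
      have hub : ∀ j, ‖yj j - xj j‖ ≤ β j * (2*M/δ) := by
        intro j
        have h1 := (hfail j).2
        have h2 : ‖f' (yj j) - f' (xj j)‖ ≤ 2*M := by
          refine (norm_sub_le _ _).trans ?_
          linarith [hMx j, hMy j]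
        have h3 : β j * ‖f' (yj j) - f' (xj j)‖ ≤ β j * (2*M) :=
          mul_le_mul_of_nonneg_left h2 (hβpos j).le
        have h4 : β j * (2*M/δ) = (β j * (2*M))/δ := by ring
        rw [h4, le_div_iff₀ hδ0]
        nlinarith [h1, h3]
      have hub' : ∀ j, ‖yj j - xj j‖ ≤ β j * (2*M/δ) := hub
      have htend : Filter.Tendsto (fun j => β j * (2*M/δ)) atTop (𝓝 0) := by
        have := hβ0.mul_const (2*M/δ)
        simpa using this
      exact squeeze_zero (fun j => norm_nonneg _) hub' htend
    -- uniform continuity: gradient differences tend to 0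
    have hΔ0 : Filter.Tendsto (fun j => ‖f' (yj j) - f' (xj j)‖) atTop (𝓝 0) := by
      rw [Metric.tendsto_atTop]
      intro ε' hε'
      obtain ⟨η, hη, hUCη⟩ := Metric.uniformContinuousOn_iff.mp hUC ε' hε'
      obtain ⟨N, hN⟩ := (Metric.tendsto_atTop.mp hdist0) η hη
      refine ⟨N, fun j hj => ?_⟩
      have hd : dist (yj j) (xj j) < η := by
        rw [dist_eq_norm]
        have := hN j hj
        rw [dist_zero_right, norm_norm] at this
        exact this
      have h1 := hUCη (yj j) (hyA j) (xj j) (hxA j) hd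
      rw [dist_eq_norm] at h1
      rw [dist_zero_right, norm_norm]
      exact h1
    -- the subdifferential error vectors tend to 0
    set εv : ℕ → H := fun j => (β j)⁻¹ • (xj j - yj j) with hεvdef
    have hεv0 : Filter.Tendsto εv atTop (𝓝 0) := by
      rw [tendsto_zero_iff_norm_tendsto_zero]
      have hub : ∀ j, ‖εv j‖ ≤ ‖f' (yj j) - f' (xj j)‖ * (1/δ) := by
        intro j
        have h1 := (hfail j).2
        have h2 : ‖εv j‖ = (β j)⁻¹ * ‖xj j - yj j‖ := by
          rw [hεvdef]
          simp only
          rw [norm_smul, Real.norm_eq_abs, abs_of_pos (inv_pos.mpr (hβpos j))]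
        rw [h2, norm_sub_rev (xj j) (yj j)]
        have hb := hβpos j
        have hkey : ‖yj j - xj j‖ ≤ β j * (‖f' (yj j) - f' (xj j)‖ * (1/δ)) := by
          have h4 := mul_le_mul_of_nonneg_right h1.le (by positivity : (0:ℝ) ≤ 1/δ)
          have h5 : δ * ‖yj j - xj j‖ * (1/δ) = ‖yj j - xj j‖ := by field_simp
          nlinarith [h4, h5]
        have h6 := mul_le_mul_of_nonneg_left hkey (inv_nonneg.mpr hb.le)
        have h7 : (β j)⁻¹ * (β j * (‖f' (yj j) - f' (xj j)‖ * (1/δ)))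
            = ‖f' (yj j) - f' (xj j)‖ * (1/δ) := by
          field_simp
        linarith [h6, h7.le, h7.ge]
      have htend : Filter.Tendsto (fun j => ‖f' (yj j) - f' (xj j)‖ * (1/δ)) atTop (𝓝 0) := by
        have := hΔ0.mul_const (1/δ)
        simpa using this
      exact squeeze_zero (fun j => norm_nonneg _) hub htend
    -- extract a convergent subsequence of the xj
    have hcpt : IsCompact (Metric.closedBall xs R0) := isCompact_closedBall xs R0
    obtain ⟨xbar, hxbarball, ψ, hψmono, hψtend⟩ := hcpt.tendsto_subseq
      (x := fun j => xj j) (fun j => by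
        rw [Metric.mem_closedBall, dist_eq_norm]; exact hbound (kseq j))
    have hψat : Filter.Tendsto ψ atTop atTop := hψmono.tendsto_atTop
    have hxtend : Filter.Tendsto (fun j => xj (ψ j)) atTop (𝓝 xbar) := hψtend
    have hsubt : Filter.Tendsto (fun j => yj (ψ j) - xj (ψ j)) atTop (𝓝 0) := by
      rw [tendsto_zero_iff_norm_tendsto_zero]
      exact hdist0.comp hψat
    have hytend : Filter.Tendsto (fun j => yj (ψ j)) atTop (𝓝 xbar) := by
      have := hsubt.add hxtend
      simpa using this
    have hβψ0 : Filter.Tendsto (fun j => β (ψ j)) atTop (𝓝 0) := hβ0.comp hψat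
    have hεvψ0 : Filter.Tendsto (fun j => εv (ψ j)) atTop (𝓝 0) := hεv0.comp hψat
    have hΔψ0 : Filter.Tendsto (fun j => f' (yj (ψ j)) - f' (xj (ψ j))) atTop (𝓝 0) := by
      rw [tendsto_zero_iff_norm_tendsto_zero]
      exact hΔ0.comp hψat
    -- xbar is a minimizer
    have hxbar : xbar ∈ argminSet f g := by
      intro z
      rcases eq_or_ne (g z) ⊤ with hgz | hgz
      · rw [hgz, EReal.add_top_of_ne_bot (hfbot z).ne']
        exact le_top
      have hfz : f z ≠ ⊤ := (hdom (lt_top_iff_ne_top.2 hgz)).ne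
      refine EReal.add_le_of_forall_lt ?_
      intro p hp q hq
      induction p using EReal.rec with
      | bot => rw [EReal.bot_add]; exact bot_le
      | top => exact absurd hp not_top_lt
      | coe r1 =>
        induction q using EReal.rec with
        | bot => rw [EReal.add_bot]; exact bot_le
        | top => exact absurd hq not_top_lt
        | coe r2 =>
          have hev1 := hytend.eventually ((hf.2.2.1 xbar) (r1 : EReal) hp)
          have hev2 := hytend.eventually ((hg.2.2.1 xbar) (r2 : EReal) hq)
          -- per-index inequality
          have hkeyj : ∀ j, φR (yj (ψ j)) + (g (yj (ψ j))).toReal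
              + ⟪εv (ψ j) + (f' (yj (ψ j)) - f' (xj (ψ j))), z - yj (ψ j)⟫
              ≤ φR z + (g z).toReal := by
            intro j
            set Y := yj (ψ j)
            set X := xj (ψ j)
            set b := β (ψ j)
            have hb : 0 < b := hβpos (ψ j)
            have h1 := prox_subgrad hg hb (hyprox (ψ j)) (y := z) hgz
            have h2 : φR Y + ⟪f' Y, z - Y⟫ ≤ φR z :=
              grad_ineq hf.2.2.2 hfbot (hgrad Y (lt_top_iff_ne_top.2 (hydom (ψ j))))
                (hdom (lt_top_iff_ne_top.2 (hydom (ψ j)))).ne hfz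
            have e1 : (1/b) * ⟪(X - b • f' X) - Y, z - Y⟫
                = ⟪εv (ψ j), z - Y⟫ - ⟪f' X, z - Y⟫ := by
              have e2 : (X - b • f' X) - Y = (X - Y) - b • f' X := by abel
              rw [e2, inner_sub_left, real_inner_smul_left]
              have e3 : ⟪εv (ψ j), z - Y⟫ = b⁻¹ * ⟪X - Y, z - Y⟫ := by
                rw [hεvdef]
                simp only
                rw [real_inner_smul_left]
              rw [e3]
              field_simp
            rw [e1] at h1
            have e4 : ⟪εv (ψ j) + (f' Y - f' X), z - Y⟫
                = (⟪εv (ψ j), z - Y⟫ - ⟪f' X, z - Y⟫) + ⟪f' Y, z - Y⟫ := by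
              rw [inner_add_left, inner_sub_left]
              ring
            rw [e4]
            linarith [h1, h2]
          -- limit of the inner product correction terms
          have hC : Filter.Tendsto
              (fun j => ⟪εv (ψ j) + (f' (yj (ψ j)) - f' (xj (ψ j))), z - yj (ψ j)⟫)
              atTop (𝓝 (0:ℝ)) := by
            have hv : Filter.Tendsto
                (fun j => εv (ψ j) + (f' (yj (ψ j)) - f' (xj (ψ j)))) atTop (𝓝 0) := by
              have := hεvψ0.add hΔψ0
              simpa using this
            have hw : Filter.Tendsto (fun j => z - yj (ψ j)) atTop (𝓝 (z - xbar)) :=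
              tendsto_const_nhds.sub hytend
            have h8 : Filter.Tendsto
                (fun j => (⟪εv (ψ j) + (f' (yj (ψ j)) - f' (xj (ψ j))), z - yj (ψ j)⟫ : ℝ))
                atTop (𝓝 (⟪(0:H), z - xbar⟫ : ℝ)) := hv.inner hw
            simpa using h8
          -- eventually r1 + r2 + C j ≤ φR z + γ z
          have hev : ∀ᶠ j in atTop, r1 + r2
              + ⟪εv (ψ j) + (f' (yj (ψ j)) - f' (xj (ψ j))), z - yj (ψ j)⟫
              ≤ φR z + (g z).toReal := by
            filter_upwards [hev1, hev2] with j h1 h2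
            have hY := hydom (ψ j)
            have hfY : f (yj (ψ j)) ≠ ⊤ := (hdom (lt_top_iff_ne_top.2 hY)).ne
            have h1' : r1 < φR (yj (ψ j)) := by
              rw [show f (yj (ψ j)) = ((φR (yj (ψ j)) : ℝ) : EReal) from
                (EReal.coe_toReal hfY (hfbot _).ne').symm, gt_iff_lt, EReal.coe_lt_coe_iff] at h1
              exact h1
            have h2' : r2 < (g (yj (ψ j))).toReal := by
              rw [show g (yj (ψ j)) = (((g (yj (ψ j))).toReal : ℝ) : EReal) from
                (EReal.coe_toReal hY (hgbot _).ne').symm, gt_iff_lt, EReal.coe_lt_coe_iff] at h2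
              exact h2
            have := hkeyj j
            linarith
          have hlim : Filter.Tendsto (fun j => r1 + r2
              + ⟪εv (ψ j) + (f' (yj (ψ j)) - f' (xj (ψ j))), z - yj (ψ j)⟫)
              atTop (𝓝 (r1 + r2)) := by
            have := hC.const_add (r1 + r2)
            simpa [add_assoc] using this
          have hfin : r1 + r2 ≤ φR z + (g z).toReal := le_of_tendsto hlim hev
          have e5 : f z + g z = ((φR z + (g z).toReal : ℝ) : EReal) := by
            rw [EReal.coe_add, EReal.coe_toReal hfz (hfbot z).ne',
              EReal.coe_toReal hgz (hgbot z).ne']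
          rw [e5, ← EReal.coe_add, EReal.coe_le_coe_iff]
          exact hfin
    -- local Lipschitz continuity near xbar yields a contradiction
    obtain ⟨ε, hεpos, L, hLpos, hLip⟩ := hloc xbar hxbar
    have hev3 : ∀ᶠ j in atTop, dist (xj (ψ j)) xbar < ε :=
      hxtend (Metric.ball_mem_nhds xbar hεpos)
    have hev4 : ∀ᶠ j in atTop, dist (yj (ψ j)) xbar < ε :=
      hytend (Metric.ball_mem_nhds xbar hεpos)
    have hev5 : ∀ᶠ j in atTop, β (ψ j) * L < δ := by
      have h1 : Filter.Tendsto (fun j => β (ψ j) * L) atTop (𝓝 0) := by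
        have := hβψ0.mul_const L
        simpa using this
      exact h1.eventually_lt_const hδ0
    obtain ⟨j, hj3, hj4, hj5⟩ := (hev3.and (hev4.and hev5)).exists
    have hfailj := (hfail (ψ j)).2
    have hlip' := hLip (yj (ψ j)) (Metric.mem_closedBall.mpr hj4.le)
      (xj (ψ j)) (Metric.mem_closedBall.mpr hj3.le)
    have hb := hβpos (ψ j)
    have hA := mul_le_mul_of_nonneg_left hlip' hb.le
    have hB := mul_le_mul_of_nonneg_right hj5.le (norm_nonneg (yj (ψ j) - xj (ψ j)))
    linarith only [hfailj, hA, hB]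
  -- conclude
  obtain ⟨c, hc, hck⟩ := hP
  obtain ⟨ε, hεpos, L, hLpos, hLip⟩ := hloc xs hxsmem
  have h𝓛pos : (0:ℝ) < max L (δ*θ/c) := lt_max_of_lt_left hLpos
  refine ⟨xs, hxsmem, ε, hεpos, max L (δ*θ/c), h𝓛pos, ?_, ?_, c, hc, hck⟩
  · intro u hu v hv
    exact (hLip u hu v hv).trans
      (mul_le_mul_of_nonneg_right (le_max_left _ _) (norm_nonneg _))
  · have hδθ : 0 < δ*θ := mul_pos hδ.1 hθ.1
    have h1 : δ*θ/(max L (δ*θ/c)) ≤ c := by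
      rw [div_le_iff₀ h𝓛pos]
      have h2 : δ*θ/c ≤ max L (δ*θ/c) := le_max_right _ _
      rw [div_le_iff₀ hc] at h2
      nlinarith [h2]
    have hbd : Filter.IsBoundedUnder (· ≤ ·) atTop a :=
      Filter.isBoundedUnder_of ⟨σ, fun k => haσ k⟩
    have hlim : (c:ℝ) ≤ Filter.liminf a atTop :=
      Filter.le_liminf_of_le hbd.isCoboundedUnder_ge
        (Filter.Eventually.of_forall hck)
    exact le_trans (le_trans (min_le_right _ _) h1) hlim
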